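/- Let K be a field of characteristic zero. Define P1, P2, P3 as the polynomials P1 = (x^3 + 2y^2 z − 4x z^2)a + (−2x y z)b + (5x^3 − x y^2 + 8x^2 z)c, P2 = (3x^2 y + 10x y z + 4y z^2)a + (−2x^3 − 10x^2 z − 8x z^2)b + (5x^2 y − y^3 + 8x y z)c, P3 = (3x^2 z + 10x z^2 + 4z^3)a + (−2y z^2)b + (−2x^3 − 5x^2 z + y^2 z)c, and let Q1, Q2, Q3 be obtained from P1, P2, P3 by substituting (P1, P2, P3) for (x, y, z) while keeping (a, b, c). Then for all x, y, z, a, b, c ∈ K with b^2 c = a^3 + 5a^2 c + 4a c^2, one has Q1·y = Q2·x, Q1·z = Q3·x, and Q2·z = Q3·y. (Equivalently, ψ ∘ ψ is the identity as a rational self-map of X = ℙ² × T.) -/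
import Mathlib


namespace Stmt10

/-- First component of the fiberwise cubic involution `ψ`. -/
def P1 {K : Type*} [Field K] (x y z a b c : K) : K :=
  (x ^ 3 + 2 * y ^ 2 * z - 4 * x * z ^ 2) * a + (-2 * x * y * z) * b +
    (5 * x ^ 3 - x * y ^ 2 + 8 * x ^ 2 * z) * c

/-- Second component of the fiberwise cubic involution `ψ`. -/
def P2 {K : Type*} [Field K] (x y z a b c : K) : K :=
  (3 * x ^ 2 * y + 10 * x * y * z + 4 * y * z ^ 2) * a +
    (-2 * x ^ 3 - 10 * x ^ 2 * z - 8 * x * z ^ 2) * b +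
    (5 * x ^ 2 * y - y ^ 3 + 8 * x * y * z) * c

/-- Third component of the fiberwise cubic involution `ψ`. -/
def P3 {K : Type*} [Field K] (x y z a b c : K) : K :=
  (3 * x ^ 2 * z + 10 * x * z ^ 2 + 4 * z ^ 3) * a + (-2 * y * z ^ 2) * b +
    (-2 * x ^ 3 - 5 * x ^ 2 * z + y ^ 2 * z) * c

/-- `ψ ∘ ψ` is the identity as a rational self-map of `X = ℙ² × T`: over every point
`[a, b, c]` of the elliptic curve `T : b²c = a³ + 5a²c + 4ac²`, the result `(Q1, Q2, Q3)` of
substituting `(P1, P2, P3)` for `(x, y, z)` in `(P1, P2, P3)` (keeping `(a, b, c)`) is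
projectively proportional to `(x, y, z)`. -/
theorem psi_is_involution {K : Type*} [Field K] [CharZero K] (x y z a b c : K)
    (hT : b ^ 2 * c = a ^ 3 + 5 * a ^ 2 * c + 4 * a * c ^ 2) :
    P1 (P1 x y z a b c) (P2 x y z a b c) (P3 x y z a b c) a b c * y =
      P2 (P1 x y z a b c) (P2 x y z a b c) (P3 x y z a b c) a b c * x ∧
    P1 (P1 x y z a b c) (P2 x y z a b c) (P3 x y z a b c) a b c * z =
      P3 (P1 x y z a b c) (P2 x y z a b c) (P3 x y z a b c) a b c * x ∧
    P2 (P1 x y z a b c) (P2 x y z a b c) (P3 x y z a b c) a b c * z =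
      P3 (P1 x y z a b c) (P2 x y z a b c) (P3 x y z a b c) a b c * y := by
  refine ⟨?_, ?_, ?_⟩ <;> simp only [P1, P2, P3]
  · linear_combination ((-8)*y^7*z^3*a + (96)*x*y^5*z^4*a + (8)*x*y^6*z^3*b + (-384)*x^2*y^3*z^5*a + (-96)*x^2*y^4*z^4*b + (120)*x^2*y^5*z^3*a + (512)*x^3*y*z^6*a + (384)*x^3*y^2*z^5*b + (-960)*x^3*y^3*z^4*a + (-120)*x^3*y^4*z^3*b + (24)*x^3*y^5*z^2*a + (-512)*x^4*z^6*b + (1920)*x^4*y*z^5*a + (960)*x^4*y^2*z^4*b + (-792)*x^4*y^3*z^3*a + (-24)*x^4*y^4*z^2*b + (-1920)*x^5*z^5*b + (2784)*x^5*y*z^4*a + (792)*x^5*y^2*z^3*b + (-240)*x^5*y^3*z^2*a + (-2784)*x^6*z^4*b + (1960)*x^6*y*z^3*a + (240)*x^6*y^2*z^2*b + (-24)*x^6*y^3*z*a + (-1960)*x^7*z^3*b + (696)*x^7*y*z^2*a + (24)*x^7*y^2*z*b + (-696)*x^8*z^2*b + (120)*x^8*y*z*a + (-120)*x^9*z*b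 + (8)*x^9*y*a + (-8)*x^10*b) * hT
  · linear_combination ((-8)*y^6*z^4*a + (96)*x*y^4*z^5*a + (8)*x*y^6*z^3*c + (-384)*x^2*y^2*z^6*a + (-96)*x^2*y^4*z^4*c + (120)*x^2*y^4*z^4*a + (512)*x^3*z^7*a + (384)*x^3*y^2*z^5*c + (-960)*x^3*y^2*z^5*a + (-120)*x^3*y^4*z^3*c + (24)*x^3*y^4*z^3*a + (-512)*x^4*z^6*c + (1920)*x^4*z^6*a + (960)*x^4*y^2*z^4*c + (-792)*x^4*y^2*z^4*a + (-24)*x^4*y^4*z^2*c + (-1920)*x^5*z^5*c + (2784)*x^5*z^5*a + (792)*x^5*y^2*z^3*c + (-240)*x^5*y^2*z^3*a + (-2784)*x^6*z^4*c + (1960)*x^6*z^4*a + (240)*x^6*y^2*z^2*c + (-24)*x^6*y^2*z^2*a + (-1960)*x^7*z^3*c + (696)*x^7*z^3*a + (24)*x^7*y^2*z*c + (-696)*x^8*z^2*c + (120)*x^8*z^2*a + (-120)*x^9*z*c + (8)*x^9*z*a + (-8)*x^10*c) * hT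
  · linear_combination ((-8)*y^6*z^4*b + (8)*y^7*z^3*c + (96)*x*y^4*z^5*b + (-96)*x*y^5*z^4*c + (-384)*x^2*y^2*z^6*b + (384)*x^2*y^3*z^5*c + (120)*x^2*y^4*z^4*b + (-120)*x^2*y^5*z^3*c + (512)*x^3*z^7*b + (-512)*x^3*y*z^6*c + (-960)*x^3*y^2*z^5*b + (960)*x^3*y^3*z^4*c + (24)*x^3*y^4*z^3*b + (-24)*x^3*y^5*z^2*c + (1920)*x^4*z^6*b + (-1920)*x^4*y*z^5*c + (-792)*x^4*y^2*z^4*b + (792)*x^4*y^3*z^3*c + (2784)*x^5*z^5*b + (-2784)*x^5*y*z^4*c + (-240)*x^5*y^2*z^3*b + (240)*x^5*y^3*z^2*c + (1960)*x^6*z^4*b + (-1960)*x^6*y*z^3*c + (-24)*x^6*y^2*z^2*b + (24)*x^6*y^3*z*c + (696)*x^7*z^3*b + (-696)*x^7*y*z^2*c + (120)*x^8*z^2*b + (-120)*x^8*y*z*c + (8)*x^9*z*b + (-8)*x^9*y*c) * hT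

end Stmt10
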